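/- Let θ₂^∞, θ₃^∞ ∈ ℂ with θ₂^∞+θ₃^∞ = 0. Let I ⊆ ℝ be an open interval with 0 ∉ I and let q₁,q₂,p₁,p₂,u : I → ℂ be differentiable with u(t) ≠ 0 and q₁(t)² + q₂(t) ≠ 0 (so that Q(t) is invertible). Define Q(t) = [[q₁, u],[−q₂/u, q₁]], P(t) = [[p₁/2, −p₂u],[(p₂q₂−θ₂^∞)/u, p₁/2]]. Define A₀(t) = [[O, O],[−tQ⁻¹, O]], A₁(t) = [[QP, −Q],[I, −PQ−I]], A₂ = [[O, I],[O, O]], B₀(t) = (1/t)[[O, Q],[O, O]], B₁(t) = [[O, O],[Q⁻¹, O]], and A(x,t) = A₀/x² + A₁/x + A₂, B(x,t) = B₀ + B₁/x. Then the zero-curvature equation ∂A/∂t − ∂B/∂x + [A, B] = O holds for all t ∈ I and all x ∈ ℂ ∖ {0} if and only if tQ′ = 2QPQ + Q and tP′ = −2PQP − P + I − tQ⁻² hold on I. -/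

import Mathlib

/-!
Both sides of the zero-curvature equation are Laurent polynomials in `x`. Its `x⁻³` and `x⁰`
coefficients vanish identically (`A₀B₁ = B₁A₀ = 0`, `A₂B₀ = B₀A₂ = 0`), so it amounts to the
vanishing of four `2×2` blocks in the `x⁻²` and `x⁻¹` coefficients. The upper-right `x⁻¹` block
is `tQ′ = 2QPQ + Q`. Given it, the `x⁻²` block holds because `(Q⁻¹)′ = −Q⁻¹Q′Q⁻¹`, the upper-left
`x⁻¹` block multiplied by `Q⁻¹` on the left is `tP′ = −2PQP − P + I − tQ⁻²`, and the lower-right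
one follows from the two equations.
-/

open Matrix

noncomputable section

/-- Entrywise derivative of a matrix-valued function of a real variable. -/
def matDeriv {m n : Type*} (F : ℝ → Matrix m n ℂ) (t : ℝ) : Matrix m n ℂ :=
  Matrix.of fun i j => deriv (fun s => F s i j) t

/-- `Q = [[q₁, u],[−q₂/u, q₁]]`. -/
def Qf (q1 q2 u : ℝ → ℂ) (t : ℝ) : Matrix (Fin 2) (Fin 2) ℂ :=
  !![q1 t, u t; -(q2 t)/(u t), q1 t]

/-- `P = [[p₁/2, −p₂u],[(p₂q₂−θ)/u, p₁/2]]`. -/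
def Pf (p1 p2 q2 : ℝ → ℂ) (θ : ℂ) (u : ℝ → ℂ) (t : ℝ) : Matrix (Fin 2) (Fin 2) ℂ :=
  !![p1 t/2, -(p2 t)*(u t); ((p2 t)*(q2 t) - θ)/(u t), p1 t/2]

/-- `A₀(t) = [[O, O],[−tQ⁻¹, O]]`. -/
def A0f (Q : Matrix (Fin 2) (Fin 2) ℂ) (t : ℂ) : Matrix (Fin 2 ⊕ Fin 2) (Fin 2 ⊕ Fin 2) ℂ :=
  fromBlocks 0 0 (-(t • Q⁻¹)) 0

/-- `A₁(t) = [[QP, −Q],[I, −PQ−I]]`. -/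
def A1f (Q P : Matrix (Fin 2) (Fin 2) ℂ) : Matrix (Fin 2 ⊕ Fin 2) (Fin 2 ⊕ Fin 2) ℂ :=
  fromBlocks (Q * P) (-Q) 1 (-(P * Q) - 1)

/-- `A₂ = [[O, I],[O, O]]`. -/
def A2c : Matrix (Fin 2 ⊕ Fin 2) (Fin 2 ⊕ Fin 2) ℂ := fromBlocks 0 1 0 0

/-- `B₀(t) = (1/t)[[O, Q],[O, O]]`. -/
def B0f (Q : Matrix (Fin 2) (Fin 2) ℂ) (t : ℂ) : Matrix (Fin 2 ⊕ Fin 2) (Fin 2 ⊕ Fin 2) ℂ :=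
  t⁻¹ • fromBlocks 0 Q 0 0

/-- `B₁(t) = [[O, O],[Q⁻¹, O]]`. -/
def B1f (Q : Matrix (Fin 2) (Fin 2) ℂ) : Matrix (Fin 2 ⊕ Fin 2) (Fin 2 ⊕ Fin 2) ℂ :=
  fromBlocks 0 0 Q⁻¹ 0

/-- `A(x,t) = A₀/x² + A₁/x + A₂`. -/
def Afun (Q P : ℝ → Matrix (Fin 2) (Fin 2) ℂ) (x : ℂ) (t : ℝ) :
    Matrix (Fin 2 ⊕ Fin 2) (Fin 2 ⊕ Fin 2) ℂ :=
  (x ^ 2)⁻¹ • A0f (Q t) (t : ℂ) + x⁻¹ • A1f (Q t) (P t) + A2c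

/-- `B(x,t) = B₀ + B₁/x`. -/
def Bfun (Q : ℝ → Matrix (Fin 2) (Fin 2) ℂ) (x : ℂ) (t : ℝ) :
    Matrix (Fin 2 ⊕ Fin 2) (Fin 2 ⊕ Fin 2) ℂ :=
  B0f (Q t) (t : ℂ) + x⁻¹ • B1f (Q t)

def EntrywiseDifferentiableAt {m n : Type*} (F : ℝ → Matrix m n ℂ) (t : ℝ) : Prop :=
  ∀ i j, DifferentiableAt ℝ (fun s => F s i j) t

namespace EntrywiseDifferentiableAt

variable {m n k l : Type*} {F G : ℝ → Matrix m n ℂ} {t : ℝ}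

theorem const (C : Matrix m n ℂ) : EntrywiseDifferentiableAt (fun _ => C) t :=
  fun _ _ => differentiableAt_const _

theorem add (hF : EntrywiseDifferentiableAt F t) (hG : EntrywiseDifferentiableAt G t) :
    EntrywiseDifferentiableAt (fun s => F s + G s) t :=
  fun i j => (hF i j).add (hG i j)

theorem sub (hF : EntrywiseDifferentiableAt F t) (hG : EntrywiseDifferentiableAt G t) :
    EntrywiseDifferentiableAt (fun s => F s - G s) t :=
  fun i j => (hF i j).sub (hG i j)

theorem neg (hF : EntrywiseDifferentiableAt F t) :
    EntrywiseDifferentiableAt (fun s => -F s) t :=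
  fun i j => (hF i j).neg

theorem const_smul (c : ℂ) (hF : EntrywiseDifferentiableAt F t) :
    EntrywiseDifferentiableAt (fun s => c • F s) t :=
  fun i j => (hF i j).const_mul c

theorem ofReal_smul (hF : EntrywiseDifferentiableAt F t) :
    EntrywiseDifferentiableAt (fun s => (s : ℂ) • F s) t :=
  fun i j => Complex.ofRealCLM.differentiableAt.mul (hF i j)

theorem mul [Fintype n] {G : ℝ → Matrix n k ℂ} (hF : EntrywiseDifferentiableAt F t)
    (hG : EntrywiseDifferentiableAt G t) : EntrywiseDifferentiableAt (fun s => F s * G s) t :=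
  fun i j => DifferentiableAt.fun_sum fun l _ => (hF i l).mul (hG l j)

theorem fromBlocks {F₁ : ℝ → Matrix m n ℂ} {F₂ : ℝ → Matrix m l ℂ} {F₃ : ℝ → Matrix k n ℂ}
    {F₄ : ℝ → Matrix k l ℂ} (h₁ : EntrywiseDifferentiableAt F₁ t)
    (h₂ : EntrywiseDifferentiableAt F₂ t) (h₃ : EntrywiseDifferentiableAt F₃ t)
    (h₄ : EntrywiseDifferentiableAt F₄ t) :
    EntrywiseDifferentiableAt (fun s => Matrix.fromBlocks (F₁ s) (F₂ s) (F₃ s) (F₄ s)) t := by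
  rintro (i | i) (j | j)
  exacts [h₁ i j, h₂ i j, h₃ i j, h₄ i j]

theorem differentiableAt_det [Fintype n] [DecidableEq n] {F : ℝ → Matrix n n ℂ}
    (hF : EntrywiseDifferentiableAt F t) : DifferentiableAt ℝ (fun s => (F s).det) t := by
  simp only [Matrix.det_apply']
  exact DifferentiableAt.fun_sum fun σ _ =>
    (differentiableAt_const _).mul (DifferentiableAt.fun_finsetProd fun i _ => hF (σ i) i)

theorem adjugate [Fintype n] [DecidableEq n] {F : ℝ → Matrix n n ℂ}
    (hF : EntrywiseDifferentiableAt F t) :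
    EntrywiseDifferentiableAt (fun s => (F s).adjugate) t := by
  intro i j
  simp only [Matrix.adjugate_apply]
  refine differentiableAt_det fun k l => ?_
  by_cases hk : k = j
  · subst hk; simp only [Matrix.updateRow_self]; exact differentiableAt_const _
  · simp only [Matrix.updateRow_ne hk]; exact hF k l

theorem inv [Fintype n] [DecidableEq n] {F : ℝ → Matrix n n ℂ}
    (hF : EntrywiseDifferentiableAt F t) (hdet : (F t).det ≠ 0) :
    EntrywiseDifferentiableAt (fun s => (F s)⁻¹) t := by
  intro i j
  simp only [Matrix.inv_def, Ring.inverse_eq_inv, Matrix.smul_apply, smul_eq_mul]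
  exact (hF.differentiableAt_det.inv hdet).mul (hF.adjugate i j)

end EntrywiseDifferentiableAt

section matDeriv

variable {m n k l : Type*} {F G : ℝ → Matrix m n ℂ} {t : ℝ}

theorem matDeriv_const (C : Matrix m n ℂ) : matDeriv (fun _ => C) t = 0 := by
  ext i j; simp [matDeriv]

theorem matDeriv_congr_of_eventuallyEq (h : F =ᶠ[nhds t] G) : matDeriv F t = matDeriv G t := by
  ext i j
  exact Filter.EventuallyEq.deriv_eq (h.mono fun s hs => by simp only [hs])

theorem matDeriv_add (hF : EntrywiseDifferentiableAt F t) (hG : EntrywiseDifferentiableAt G t) :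
    matDeriv (fun s => F s + G s) t = matDeriv F t + matDeriv G t := by
  ext i j; exact deriv_add (hF i j) (hG i j)

theorem matDeriv_sub (hF : EntrywiseDifferentiableAt F t) (hG : EntrywiseDifferentiableAt G t) :
    matDeriv (fun s => F s - G s) t = matDeriv F t - matDeriv G t := by
  ext i j; exact deriv_sub (hF i j) (hG i j)

theorem matDeriv_neg : matDeriv (fun s => -F s) t = -matDeriv F t := by
  ext i j; exact deriv.neg

theorem matDeriv_const_smul (c : ℂ) : matDeriv (fun s => c • F s) t = c • matDeriv F t := by
  ext i j; exact deriv_const_mul_field c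

theorem matDeriv_ofReal_smul (hF : EntrywiseDifferentiableAt F t) :
    matDeriv (fun s => (s : ℂ) • F s) t = F t + (t : ℂ) • matDeriv F t := by
  ext i j
  have h := (hasDerivAt_id t).ofReal_comp.fun_mul (hF i j).hasDerivAt
  simp only [matDeriv, Matrix.smul_apply, Matrix.add_apply, Matrix.of_apply, smul_eq_mul]
  simpa using h.deriv

theorem matDeriv_mul [Fintype n] {G : ℝ → Matrix n k ℂ} (hF : EntrywiseDifferentiableAt F t)
    (hG : EntrywiseDifferentiableAt G t) :
    matDeriv (fun s => F s * G s) t = matDeriv F t * G t + F t * matDeriv G t := by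
  ext i j
  simp only [matDeriv, Matrix.mul_apply, Matrix.add_apply, Matrix.of_apply]
  rw [deriv_fun_sum fun l _ => (hF i l).fun_mul (hG l j), ← Finset.sum_add_distrib]
  exact Finset.sum_congr rfl fun l _ => deriv_fun_mul (hF i l) (hG l j)

theorem matDeriv_fromBlocks {F₁ : ℝ → Matrix m n ℂ} {F₂ : ℝ → Matrix m l ℂ}
    {F₃ : ℝ → Matrix k n ℂ} {F₄ : ℝ → Matrix k l ℂ} :
    matDeriv (fun s => fromBlocks (F₁ s) (F₂ s) (F₃ s) (F₄ s)) t
      = fromBlocks (matDeriv F₁ t) (matDeriv F₂ t) (matDeriv F₃ t) (matDeriv F₄ t) := by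
  ext (i | i) (j | j) <;> rfl

theorem matDeriv_inv [Fintype n] [DecidableEq n] {F : ℝ → Matrix n n ℂ}
    (hF : EntrywiseDifferentiableAt F t) (hdet : (F t).det ≠ 0) :
    matDeriv (fun s => (F s)⁻¹) t = -((F t)⁻¹ * matDeriv F t * (F t)⁻¹) := by
  have hunit : ∀ᶠ s in nhds t, F s * (F s)⁻¹ = 1 :=
    (hF.differentiableAt_det.continuousAt.eventually_ne hdet).mono fun s hs =>
      Matrix.mul_nonsing_inv _ (isUnit_iff_ne_zero.mpr hs)
  have hprod : matDeriv F t * (F t)⁻¹ + F t * matDeriv (fun s => (F s)⁻¹) t = 0 := by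
    rw [← matDeriv_mul hF (hF.inv hdet), matDeriv_congr_of_eventuallyEq hunit, matDeriv_const]
  have hleft : (F t)⁻¹ * F t = 1 := Matrix.nonsing_inv_mul _ (isUnit_iff_ne_zero.mpr hdet)
  calc matDeriv (fun s => (F s)⁻¹) t
      = (F t)⁻¹ * (F t * matDeriv (fun s => (F s)⁻¹) t) := by
        rw [← Matrix.mul_assoc, hleft, Matrix.one_mul]
    _ = -((F t)⁻¹ * matDeriv F t * (F t)⁻¹) := by
        rw [eq_neg_of_add_eq_zero_right hprod, Matrix.mul_neg, Matrix.mul_assoc]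

end matDeriv

theorem forall_inv_sq_smul_add_inv_smul_eq_zero_iff {𝕜 V : Type*} [Field 𝕜] [CharZero 𝕜]
    [AddCommGroup V] [Module 𝕜 V] {M N : V} :
    (∀ x : 𝕜, x ≠ 0 → (x ^ 2)⁻¹ • M + x⁻¹ • N = 0) ↔ M = 0 ∧ N = 0 := by
  refine ⟨fun h => ?_, fun ⟨hM, hN⟩ x _ => by rw [hM, hN, smul_zero, smul_zero, add_zero]⟩
  have hsum : M + N = 0 := by simpa using h 1 one_ne_zero
  have hdiff : M - N = 0 := by simpa [sub_eq_add_neg] using h (-1) (neg_ne_zero.mpr one_ne_zero)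
  have hM : (2 : 𝕜) • M = 0 := by rw [two_smul]; simpa using congrArg₂ (· + ·) hsum hdiff
  have hM' : M = 0 := (smul_eq_zero.mp hM).resolve_left two_ne_zero
  exact ⟨hM', by simpa [hM'] using hsum⟩

theorem blockEquations_iff_painleveSystem {𝕜 A : Type*} [Field 𝕜] [Ring A] [Algebra 𝕜 A]
    {q r p q' p' : A} {τ : 𝕜} (hτ : τ ≠ 0) (hqr : q * r = 1) (hrq : r * q = 1) :
    (τ • (r * q' * r) - (2 : 𝕜) • p - r = 0 ∧
      q' * p + q * p' + r - τ⁻¹ • q = 0 ∧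
      -q' + τ⁻¹ • ((2 : 𝕜) • (q * p * q) + q) = 0 ∧
      -(p' * q + p * q') + τ⁻¹ • q - r = 0)
    ↔ (τ • q' = (2 : 𝕜) • (q * p * q) + q ∧
      τ • p' = -((2 : 𝕜) • (p * q * p)) - p + 1 - τ • (r * r)) := by
  have cancel_qr (a : A) : a * q * r = a := by rw [mul_assoc, hqr, mul_one]
  have cancel_rq (a : A) : a * r * q = a := by rw [mul_assoc, hrq, mul_one]
  rw [← eq_inv_smul_iff₀ hτ, ← eq_inv_smul_iff₀ hτ]
  constructor
  · rintro ⟨-, hN₁₁, hN₁₂, -⟩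
    have hq' : q' = τ⁻¹ • ((2 : 𝕜) • (q * p * q) + q) := neg_add_eq_zero.mp hN₁₂
    refine ⟨hq', ?_⟩
    have hqp' : q * p' = τ⁻¹ • q - r - q' * p := by rw [← sub_eq_zero, ← hN₁₁]; abel
    have hp' : p' = r * (τ⁻¹ • q - r - q' * p) := by rw [← hqp', ← mul_assoc, hrq, one_mul]
    rw [hp', hq']
    simp only [mul_sub, mul_add, add_mul, mul_smul_comm, smul_mul_assoc, smul_sub, smul_add,
      smul_smul, ← mul_assoc, hrq, one_mul]
    match_scalars <;> field_simp
  · rintro ⟨rfl, rfl⟩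
    refine ⟨?_, ?_, ?_, ?_⟩ <;>
    simp only [mul_sub, sub_mul, mul_add, add_mul, mul_neg, neg_mul, mul_smul_comm,
      smul_mul_assoc, smul_sub, smul_add, smul_neg, smul_smul, ← mul_assoc, hqr, hrq, one_mul,
      mul_one, cancel_qr, cancel_rq] <;>
    match_scalars <;> field_simp <;> ring

theorem laxPair_commutator {q p : Matrix (Fin 2) (Fin 2) ℂ} {x τ : ℂ} (hx : x ≠ 0) (hτ : τ ≠ 0)
    (hq : q.det ≠ 0) :
    ((x ^ 2)⁻¹ • A0f q τ + x⁻¹ • A1f q p + A2c) * (B0f q τ + x⁻¹ • B1f q)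
      - (B0f q τ + x⁻¹ • B1f q) * ((x ^ 2)⁻¹ • A0f q τ + x⁻¹ • A1f q p + A2c)
    = (x ^ 2)⁻¹ • fromBlocks 0 0 (-((2 : ℂ) • p) - q⁻¹) 0
      + x⁻¹ • fromBlocks (q⁻¹ - τ⁻¹ • q) (τ⁻¹ • ((2 : ℂ) • (q * p * q) + q)) 0
          (τ⁻¹ • q - q⁻¹) := by
  have hqr : q * q⁻¹ = 1 := mul_nonsing_inv q (isUnit_iff_ne_zero.mpr hq)
  have hrq : q⁻¹ * q = 1 := nonsing_inv_mul q (isUnit_iff_ne_zero.mpr hq)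
  rw [← sub_eq_zero]
  simp only [A0f, A1f, A2c, B0f, B1f, fromBlocks_smul, fromBlocks_add, fromBlocks_multiply,
    sub_eq_add_neg, fromBlocks_neg, smul_mul_assoc, mul_smul_comm, Matrix.mul_add,
    Matrix.add_mul, Matrix.mul_neg, Matrix.neg_mul, Matrix.mul_one, Matrix.one_mul,
    Matrix.mul_zero, Matrix.zero_mul, smul_zero, smul_neg, add_zero, zero_add, neg_zero,
    ← Matrix.mul_assoc, hqr, hrq, mul_nonsing_inv_cancel_right _ _ (isUnit_iff_ne_zero.mpr hq)]
  rw [← fromBlocks_zero, fromBlocks_inj]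
  refine ⟨?_, ?_, ?_, ?_⟩ <;> match_scalars <;> field_simp <;> ring

section LaxPair

variable {Q P : ℝ → Matrix (Fin 2) (Fin 2) ℂ} {t : ℝ}

theorem matDeriv_Afun (hQ : EntrywiseDifferentiableAt Q t) (hP : EntrywiseDifferentiableAt P t)
    (hdet : (Q t).det ≠ 0) (x : ℂ) :
    matDeriv (fun s => Afun Q P x s) t
      = (x ^ 2)⁻¹ • fromBlocks 0 0
          (-(Q t)⁻¹ + (t : ℂ) • ((Q t)⁻¹ * matDeriv Q t * (Q t)⁻¹)) 0
        + x⁻¹ • fromBlocks (matDeriv Q t * P t + Q t * matDeriv P t) (-matDeriv Q t) 0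
          (-(matDeriv P t * Q t + P t * matDeriv Q t)) := by
  have hQinv := hQ.inv hdet
  have hA0 : EntrywiseDifferentiableAt (fun s => A0f (Q s) s) t :=
    .fromBlocks (.const 0) (.const 0) hQinv.ofReal_smul.neg (.const 0)
  have hA1 : EntrywiseDifferentiableAt (fun s => A1f (Q s) (P s)) t :=
    .fromBlocks (hQ.mul hP) hQ.neg (.const 1) ((hP.mul hQ).neg.sub (.const 1))
  have hA0' : matDeriv (fun s => A0f (Q s) s) t
      = fromBlocks 0 0 (-(Q t)⁻¹ + (t : ℂ) • ((Q t)⁻¹ * matDeriv Q t * (Q t)⁻¹)) 0 := by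
    rw [show (fun s : ℝ => A0f (Q s) s)
        = fun s : ℝ => fromBlocks 0 0 (-((s : ℂ) • (Q s)⁻¹)) 0 from rfl,
      matDeriv_fromBlocks, matDeriv_neg, matDeriv_ofReal_smul hQinv, matDeriv_inv hQ hdet,
      matDeriv_const]
    simp only [smul_neg, neg_add, neg_neg]
  have hA1' : matDeriv (fun s => A1f (Q s) (P s)) t
      = fromBlocks (matDeriv Q t * P t + Q t * matDeriv P t) (-matDeriv Q t) 0
          (-(matDeriv P t * Q t + P t * matDeriv Q t)) := by
    rw [show (fun s => A1f (Q s) (P s))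
        = fun s => fromBlocks (Q s * P s) (-Q s) 1 (-(P s * Q s) - 1) from rfl,
      matDeriv_fromBlocks, matDeriv_mul hQ hP, matDeriv_neg,
      matDeriv_sub (hP.mul hQ).neg (.const 1), matDeriv_neg, matDeriv_mul hP hQ, matDeriv_const,
      sub_zero]
  rw [show (fun s => Afun Q P x s)
      = fun s => (x ^ 2)⁻¹ • A0f (Q s) s + x⁻¹ • A1f (Q s) (P s) + A2c from rfl,
    matDeriv_add ((hA0.const_smul _).add (hA1.const_smul _)) (.const _),
    matDeriv_add (hA0.const_smul _) (hA1.const_smul _), matDeriv_const_smul, matDeriv_const_smul,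
    matDeriv_const, add_zero, hA0', hA1']

theorem zeroCurvature_iff_blockEquations (hQ : EntrywiseDifferentiableAt Q t)
    (hP : EntrywiseDifferentiableAt P t) (hdet : (Q t).det ≠ 0) (ht : (t : ℂ) ≠ 0) :
    (∀ x : ℂ, x ≠ 0 →
        matDeriv (fun s => Afun Q P x s) t
          = -((x ^ 2)⁻¹ • B1f (Q t))
            - (Afun Q P x t * Bfun Q x t - Bfun Q x t * Afun Q P x t))
    ↔ ((t : ℂ) • ((Q t)⁻¹ * matDeriv Q t * (Q t)⁻¹) - (2 : ℂ) • P t - (Q t)⁻¹ = 0 ∧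
      matDeriv Q t * P t + Q t * matDeriv P t + (Q t)⁻¹ - (t : ℂ)⁻¹ • Q t = 0 ∧
      -matDeriv Q t + (t : ℂ)⁻¹ • ((2 : ℂ) • (Q t * P t * Q t) + Q t) = 0 ∧
      -(matDeriv P t * Q t + P t * matDeriv Q t) + (t : ℂ)⁻¹ • Q t - (Q t)⁻¹ = 0) := by
  set M := (t : ℂ) • ((Q t)⁻¹ * matDeriv Q t * (Q t)⁻¹) - (2 : ℂ) • P t - (Q t)⁻¹
  set N₁₁ := matDeriv Q t * P t + Q t * matDeriv P t + (Q t)⁻¹ - (t : ℂ)⁻¹ • Q t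
  set N₁₂ := -matDeriv Q t + (t : ℂ)⁻¹ • ((2 : ℂ) • (Q t * P t * Q t) + Q t)
  set N₂₂ := -(matDeriv P t * Q t + P t * matDeriv Q t) + (t : ℂ)⁻¹ • Q t - (Q t)⁻¹
  have hlaurent : ∀ x : ℂ, x ≠ 0 →
      (matDeriv (fun s => Afun Q P x s) t
          = -((x ^ 2)⁻¹ • B1f (Q t))
            - (Afun Q P x t * Bfun Q x t - Bfun Q x t * Afun Q P x t)
        ↔ (x ^ 2)⁻¹ • fromBlocks 0 0 M 0 + x⁻¹ • fromBlocks N₁₁ N₁₂ 0 N₂₂ = 0) := by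
    intro x hx
    rw [← sub_eq_zero, matDeriv_Afun hQ hP hdet, Afun, Bfun, laxPair_commutator hx ht hdet]
    convert Iff.rfl using 2
    simp only [B1f, M, N₁₁, N₁₂, N₂₂, fromBlocks_smul, sub_eq_add_neg, fromBlocks_neg,
      fromBlocks_add, smul_zero, neg_zero, add_zero, zero_add]
    congr 1 <;> module
  rw [forall_congr' fun x => forall_congr' (hlaurent x),
    forall_inv_sq_smul_add_inv_smul_eq_zero_iff, ← fromBlocks_zero, fromBlocks_inj, fromBlocks_inj]
  simp only [true_and, and_true]

end LaxPair

section Coordinates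

variable {q1 q2 p1 p2 u : ℝ → ℂ} {θ : ℂ} {t : ℝ}

theorem det_Qf (hu : u t ≠ 0) : (Qf q1 q2 u t).det = q1 t ^ 2 + q2 t := by
  rw [Qf, Matrix.det_fin_two_of]
  field_simp
  ring

theorem entrywiseDifferentiableAt_Qf (hq1 : DifferentiableAt ℝ q1 t)
    (hq2 : DifferentiableAt ℝ q2 t) (hu' : DifferentiableAt ℝ u t) (hu : u t ≠ 0) :
    EntrywiseDifferentiableAt (Qf q1 q2 u) t := by
  intro i j
  fin_cases i <;> fin_cases j
  exacts [hq1, hu', hq2.neg.div hu' hu, hq1]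

theorem entrywiseDifferentiableAt_Pf (hq2 : DifferentiableAt ℝ q2 t)
    (hp1 : DifferentiableAt ℝ p1 t) (hp2 : DifferentiableAt ℝ p2 t)
    (hu' : DifferentiableAt ℝ u t) (hu : u t ≠ 0) :
    EntrywiseDifferentiableAt (Pf p1 p2 q2 θ u) t := by
  intro i j
  fin_cases i <;> fin_cases j
  exacts [hp1.div_const 2, hp2.neg.mul hu', ((hp2.mul hq2).sub_const θ).div hu' hu,
    hp1.div_const 2]

end Coordinates

theorem lax_pair_matrix_PIII_D8_general
    (θi2 : ℂ)
    (α β : ℝ) (h0 : (0:ℝ) ∉ Set.Ioo α β)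
    (q1 q2 p1 p2 u : ℝ → ℂ)
    (hdiff : ∀ t ∈ Set.Ioo α β, DifferentiableAt ℝ q1 t ∧ DifferentiableAt ℝ q2 t ∧
      DifferentiableAt ℝ p1 t ∧ DifferentiableAt ℝ p2 t ∧ DifferentiableAt ℝ u t)
    (hu : ∀ t ∈ Set.Ioo α β, u t ≠ 0)
    (hdet : ∀ t ∈ Set.Ioo α β, (q1 t) ^ 2 + q2 t ≠ 0)
    (Q P : ℝ → Matrix (Fin 2) (Fin 2) ℂ)
    (hQ : Q = Qf q1 q2 u) (hP : P = Pf p1 p2 q2 θi2 u) :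
    -- zero curvature:  ∂A/∂t − ∂B/∂x + [A,B] = O
    (∀ t ∈ Set.Ioo α β, ∀ x : ℂ, x ≠ 0 →
        matDeriv (fun s => Afun Q P x s) t
          = -((x ^ 2)⁻¹ • B1f (Q t))
            - (Afun Q P x t * Bfun Q x t - Bfun Q x t * Afun Q P x t))
    ↔
    -- `tQ′ = 2QPQ + Q` and `tP′ = −2PQP − P + I − tQ⁻²`
    ((∀ t ∈ Set.Ioo α β,
        (t : ℂ) • matDeriv Q t = (2:ℂ) • (Q t * P t * Q t) + Q t) ∧
      (∀ t ∈ Set.Ioo α β,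
        (t : ℂ) • matDeriv P t
          = -((2:ℂ) • (P t * Q t * P t)) - P t + (1 : Matrix (Fin 2) (Fin 2) ℂ)
            - (t : ℂ) • ((Q t)⁻¹ * (Q t)⁻¹))) := by
  subst hQ hP
  rw [← forall₂_and]
  refine forall₂_congr fun t ht => ?_
  obtain ⟨hq1, hq2, hp1, hp2, hu'⟩ := hdiff t ht
  have hdetQ : (Qf q1 q2 u t).det ≠ 0 := by rw [det_Qf (hu t ht)]; exact hdet t ht
  have hunit : IsUnit (Qf q1 q2 u t).det := isUnit_iff_ne_zero.mpr hdetQ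
  have ht0 : (t : ℂ) ≠ 0 := Complex.ofReal_ne_zero.mpr fun h => h0 (h ▸ ht)
  rw [zeroCurvature_iff_blockEquations (entrywiseDifferentiableAt_Qf hq1 hq2 hu' (hu t ht))
      (entrywiseDifferentiableAt_Pf hq2 hp1 hp2 hu' (hu t ht)) hdetQ ht0]
  exact blockEquations_iff_painleveSystem ht0 (Matrix.mul_nonsing_inv _ hunit)
    (Matrix.nonsing_inv_mul _ hunit)

theorem lax_pair_matrix_PIII_D8
    (θi2 θi3 : ℂ) (hFuchs : θi2 + θi3 = 0)
    (α β : ℝ) (h0 : (0:ℝ) ∉ Set.Ioo α β)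
    (q1 q2 p1 p2 u : ℝ → ℂ)
    (hdiff : ∀ t ∈ Set.Ioo α β, DifferentiableAt ℝ q1 t ∧ DifferentiableAt ℝ q2 t ∧
      DifferentiableAt ℝ p1 t ∧ DifferentiableAt ℝ p2 t ∧ DifferentiableAt ℝ u t)
    (hu : ∀ t ∈ Set.Ioo α β, u t ≠ 0)
    (hdet : ∀ t ∈ Set.Ioo α β, (q1 t) ^ 2 + q2 t ≠ 0)
    (Q P : ℝ → Matrix (Fin 2) (Fin 2) ℂ)
    (hQ : Q = Qf q1 q2 u) (hP : P = Pf p1 p2 q2 θi2 u) :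
    -- zero curvature:  ∂A/∂t − ∂B/∂x + [A,B] = O
    (∀ t ∈ Set.Ioo α β, ∀ x : ℂ, x ≠ 0 →
        matDeriv (fun s => Afun Q P x s) t
          = -((x ^ 2)⁻¹ • B1f (Q t))
            - (Afun Q P x t * Bfun Q x t - Bfun Q x t * Afun Q P x t))
    ↔
    -- `tQ′ = 2QPQ + Q` and `tP′ = −2PQP − P + I − tQ⁻²`
    ((∀ t ∈ Set.Ioo α β,
        (t : ℂ) • matDeriv Q t = (2:ℂ) • (Q t * P t * Q t) + Q t) ∧
      (∀ t ∈ Set.Ioo α β,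
        (t : ℂ) • matDeriv P t
          = -((2:ℂ) • (P t * Q t * P t)) - P t + (1 : Matrix (Fin 2) (Fin 2) ℂ)
            - (t : ℂ) • ((Q t)⁻¹ * (Q t)⁻¹))) :=
  lax_pair_matrix_PIII_D8_general θi2 α β h0 q1 q2 p1 p2 u hdiff hu hdet Q P hQ hP

end
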